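/- arXiv:2401.14514 — 4 statements merged into one kernel-verified Lean document; each statement's English description precedes it below -/
import Mathlib

section
/- Let d be a squarefree integer with d ∉ {0,1}. If there exist rational numbers x, y with d·y² = f₁₃(x), then d > 0 and d ≡ 1 (mod 8). -/
private lemma zmod8_odd_left : ∀ m c : ZMod 8,
    (2*m+1)^6 - 2*(2*m+1)^5*c + (2*m+1)^4*c^2 - 2*(2*m+1)^3*c^3
      + 6*(2*m+1)^2*c^4 - 4*(2*m+1)*c^5 + c^6 = 1 := by decide

private lemma zmod8_odd_right : ∀ m a : ZMod 8,
    a^6 - 2*a^5*(2*m+1) + a^4*(2*m+1)^2 - 2*a^3*(2*m+1)^3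
      + 6*a^2*(2*m+1)^4 - 4*a*(2*m+1)^5 + (2*m+1)^6 = 1 := by decide

private lemma zmod8_unit_sq : ∀ u v : ZMod 8, u * v^2 = 1 → u = 1 := by decide

/-- Congruence conditions for rational points on twists of `X₁(13)` (Krumm):
if `d` is squarefree, `d ∉ {0,1}`, and `d·y² = f₁₃(x)` has a rational solution,
then `d > 0` and `d ≡ 1 (mod 8)`. -/
theorem twist_X1_13_congruence (d : ℤ) (hd : Squarefree d) (hd0 : d ≠ 0) (hd1 : d ≠ 1)
    (h : ∃ x y : ℚ, (d : ℚ) * y ^ 2 =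
      x ^ 6 - 2 * x ^ 5 + x ^ 4 - 2 * x ^ 3 + 6 * x ^ 2 - 4 * x + 1) :
    0 < d ∧ d ≡ 1 [ZMOD 8] := by
  obtain ⟨x, y, hxy⟩ := h
  set a : ℤ := x.num with ha
  set b : ℤ := (x.den : ℤ) with hbdef
  have hbpos : 0 < b := by rw [hbdef]; exact_mod_cast x.pos
  set N : ℤ := a^6 - 2*a^5*b + a^4*b^2 - 2*a^3*b^3 + 6*a^2*b^4 - 4*a*b^5 + b^6 with hN
  -- clear denominators of x
  have key : (d:ℚ) * (y * (b:ℚ)^3)^2 = (N : ℚ) := by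
    have hb0 : ((x.den:ℚ)) ≠ 0 := by exact_mod_cast x.den_ne_zero
    have hx : (x.num : ℚ) = x * (x.den : ℚ) :=
      (div_eq_iff hb0).mp (Rat.num_div_den x)
    rw [hN, ha, hbdef]
    push_cast
    rw [hx]
    linear_combination ((x.den:ℚ))^6 * hxy
  set Y : ℚ := y * (b:ℚ)^3 with hYdef
  -- Y is an integer
  have hnum : d * Y.num^2 = N * (Y.den:ℤ)^2 := by
    have hYd0 : ((Y.den:ℚ)) ≠ 0 := by exact_mod_cast Y.den_ne_zero
    have hY : (Y.num : ℚ) = Y * (Y.den : ℚ) :=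
      (div_eq_iff hYd0).mp (Rat.num_div_den Y)
    have : (d:ℚ) * (Y.num:ℚ)^2 = (N:ℚ) * (Y.den:ℚ)^2 := by
      rw [hY]; linear_combination ((Y.den:ℚ))^2 * key
    exact_mod_cast this
  have hden1 : (Y.den : ℤ) = 1 := by
    have hcop : IsCoprime (Y.num) ((Y.den:ℤ)) :=
      Int.isCoprime_iff_gcd_eq_one.mpr Y.reduced
    have hdvd : ((Y.den:ℤ))^2 ∣ d := by
      have h1 : ((Y.den:ℤ))^2 ∣ d * Y.num^2 := ⟨N, by linarith [hnum]⟩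
      exact (hcop.symm.pow).dvd_of_dvd_mul_right h1
    have := hd (Y.den:ℤ) (by rwa [← sq])
    rcases Int.isUnit_iff.mp this with h1 | h1
    · exact h1
    · exfalso; omega
  have hP : d * Y.num^2 = N := by
    rw [hnum, hden1]; ring
  -- N ≡ 1 mod 8
  have hab : ¬((2:ℤ) ∣ a ∧ (2:ℤ) ∣ b) := by
    rintro ⟨h2a, h2b⟩
    have hcop := x.reduced
    have : (2:ℕ) ∣ Nat.gcd x.num.natAbs x.den := by
      refine Nat.dvd_gcd ?_ ?_
      · have := Int.natAbs_dvd_natAbs.mpr h2a; simpa using this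
      · have := Int.natAbs_dvd_natAbs.mpr h2b; simpa [hbdef] using this
    rw [Nat.Coprime] at hcop
    omega
  have hN8 : ((N : ZMod 8)) = 1 := by
    rcases Decidable.not_and_iff_or_not.mp hab with h2 | h2
    · obtain ⟨m, hm⟩ : ∃ m, a = 2*m + 1 := by
        rcases Int.even_or_odd a with he | ho
        · exact absurd he.two_dvd h2
        · obtain ⟨m, hm⟩ := ho; exact ⟨m, hm⟩
      rw [hN, hm]
      push_cast
      exact zmod8_odd_left (m : ZMod 8) (b : ZMod 8)
    · obtain ⟨m, hm⟩ : ∃ m, b = 2*m + 1 := by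
        rcases Int.even_or_odd b with he | ho
        · exact absurd he.two_dvd h2
        · obtain ⟨m, hm⟩ := ho; exact ⟨m, hm⟩
      rw [hN, hm]
      push_cast
      exact zmod8_odd_right (m : ZMod 8) (a : ZMod 8)
  have hd8 : ((d : ZMod 8)) = 1 := by
    have : ((d : ZMod 8)) * ((Y.num : ZMod 8))^2 = 1 := by
      have := congrArg (fun z : ℤ => (z : ZMod 8)) hP
      push_cast at this
      rw [this, hN8]
    exact zmod8_unit_sq _ _ this
  constructor
  · -- positivity
    have hNpos : 0 < N := by
      rw [hN]
      nlinarith [sq_nonneg (7*b^3 - 16*a*b^2 + 2*a^2*b + 3*a^3),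
        sq_nonneg (52*a*b^2 - 45*a^2*b + 6*a^3),
        sq_nonneg (721*a^2*b - 422*a^3), sq_nonneg (a^3), pow_pos hbpos 6]
    by_contra hneg
    push_neg at hneg
    nlinarith [sq_nonneg Y.num]
  · have : ((d : ZMod 8)) = ((1 : ℤ) : ZMod 8) := by rw [hd8]; norm_num
    exact (ZMod.intCast_eq_intCast_iff _ _ _).mp this
end

section
/- Let d be a squarefree integer with d ∉ {0,1}. If there exist rational numbers x, y with d·y² = f₁₈(x), then d > 0 and d ≡ 1 (mod 24) or d ≡ 9 (mod 24). -/
/-!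
Since `f₁₈ > 0` on the reals, `d > 0`. Write `x = a / b` in lowest terms; clearing denominators
and using that `d` is squarefree turns the point into an integer solution of `d z² = F(a, b)`,
where `F` is the homogenised sextic. For coprime `a, b` one checks by reduction modulo `8`, `9`
and `3` that `F(a, b) ≡ 1 (mod 8)`, `9 ∤ F(a, b)` and `F(a, b) ≢ 2 (mod 3)`. The first forces `z`
odd and hence `d ≡ 1 (mod 8)`; the second forces `3 ∤ z`, so `d ≡ F(a, b) ≢ 2 (mod 3)`.
-/

theorem Rat.den_eq_one_of_squarefree_mul_sq {d N : ℤ} (hd : Squarefree d) {q : ℚ}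
    (h : d * q ^ 2 = N) : q.den = 1 := by
  have hq : (q.num : ℚ) = q * q.den := (Rat.mul_den_eq_num q).symm
  have key : d * q.num ^ 2 = N * (q.den : ℤ) ^ 2 := by
    have : (d : ℚ) * q.num ^ 2 = N * (q.den : ℚ) ^ 2 := by rw [hq, ← h]; ring
    exact_mod_cast this
  have hdvd : (q.den : ℤ) * q.den ∣ d := by
    rw [← sq]
    exact (q.isCoprime_num_den.symm.pow).dvd_of_dvd_mul_right ⟨N, by rw [key, mul_comm]⟩
  simpa [Int.isUnit_iff_natAbs_eq] using hd _ hdvd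

section
variable {R : Type*} [CommRing R]

def f18Form (a b : R) : R :=
  a ^ 6 + 2 * a ^ 5 * b + 5 * a ^ 4 * b ^ 2 + 10 * a ^ 3 * b ^ 3 + 10 * a ^ 2 * b ^ 4 +
    4 * a * b ^ 5 + b ^ 6

theorem Int.cast_f18Form (a b : ℤ) : ((f18Form a b : ℤ) : R) = f18Form (a : R) b := by
  simp only [f18Form]; push_cast; rfl

end

theorem f18_pos {K : Type*} [Field K] [LinearOrder K] [IsStrictOrderedRing K] (x : K) :
    0 < x ^ 6 + 2 * x ^ 5 + 5 * x ^ 4 + 10 * x ^ 3 + 10 * x ^ 2 + 4 * x + 1 := by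
  nlinarith [sq_nonneg (2 + 4 * x - x ^ 3), sq_nonneg (12 * x + 11 * x ^ 2),
    sq_nonneg (47 * x ^ 2 + 24 * x ^ 3), sq_nonneg (x ^ 3)]

theorem f18Form_num_den (x : ℚ) :
    ((f18Form x.num x.den : ℤ) : ℚ) =
      x.den ^ 6 * (x ^ 6 + 2 * x ^ 5 + 5 * x ^ 4 + 10 * x ^ 3 + 10 * x ^ 2 + 4 * x + 1) := by
  rw [Int.cast_f18Form, Int.cast_natCast, ← Rat.mul_den_eq_num, f18Form]; ring

theorem exists_int_mul_sq_eq_f18Form {d : ℤ} (hd : Squarefree d) {x y : ℚ}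
    (h : d * y ^ 2 = x ^ 6 + 2 * x ^ 5 + 5 * x ^ 4 + 10 * x ^ 3 + 10 * x ^ 2 + 4 * x + 1) :
    ∃ z : ℤ, d * z ^ 2 = f18Form x.num x.den := by
  set q := y * x.den ^ 3
  have hq : d * q ^ 2 = ((f18Form x.num x.den : ℤ) : ℚ) := by
    rw [f18Form_num_den, ← h]; ring
  refine ⟨q.num, ?_⟩
  rw [← Rat.coe_int_num_of_den_eq_one (Rat.den_eq_one_of_squarefree_mul_sq hd hq)] at hq
  exact_mod_cast hq

section
variable {a b : ℤ}

theorem f18Form_modEq_one_eight (h : IsCoprime a b) : f18Form a b ≡ 1 [ZMOD 8] := by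
  have key : ∀ a b : ZMod 8, IsCoprime a b → f18Form a b = 1 := by unfold IsCoprime; decide
  refine (ZMod.intCast_eq_intCast_iff _ _ 8).mp ?_
  rw [Int.cast_f18Form, Int.cast_one]
  exact key _ _ h.intCast

theorem f18Form_not_dvd_nine (h : IsCoprime a b) : ¬ 9 ∣ f18Form a b := by
  have key : ∀ a b : ZMod 9, IsCoprime a b → f18Form a b ≠ 0 := by unfold IsCoprime; decide
  intro h9
  have := (ZMod.intCast_zmod_eq_zero_iff_dvd _ 9).mpr h9
  rw [Int.cast_f18Form] at this
  exact key _ _ h.intCast this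

theorem f18Form_not_modEq_two_three (h : IsCoprime a b) : ¬ f18Form a b ≡ 2 [ZMOD 3] := by
  have key : ∀ a b : ZMod 3, IsCoprime a b → f18Form a b ≠ 2 := by unfold IsCoprime; decide
  intro h3
  have := (ZMod.intCast_eq_intCast_iff _ _ 3).mpr h3
  rw [Int.cast_f18Form, Int.cast_ofNat] at this
  exact key _ _ h.intCast this

end

section
variable {d z w : ℤ}

theorem Int.modEq_one_eight_of_mul_sq_eq (h : d * z ^ 2 = w) (hw : w ≡ 1 [ZMOD 8]) :
    d ≡ 1 [ZMOD 8] := by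
  have key : ∀ d z : ZMod 8, d * z ^ 2 = 1 → d = 1 := by decide
  have hw' := (ZMod.intCast_eq_intCast_iff _ _ 8).mpr hw
  rw [← h] at hw'
  push_cast at hw'
  exact (ZMod.intCast_eq_intCast_iff _ _ 8).mp (by simpa using key _ _ hw')

theorem Int.modEq_three_of_mul_sq_eq (h : d * z ^ 2 = w) (hw : ¬ 9 ∣ w) : d ≡ w [ZMOD 3] := by
  have hz : (z : ZMod 3) ≠ 0 := by
    rw [Ne, ZMod.intCast_zmod_eq_zero_iff_dvd]
    rintro ⟨c, rfl⟩
    exact hw ⟨d * c ^ 2, by rw [← h]; ring⟩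
  refine (ZMod.intCast_eq_intCast_iff _ _ 3).mp ?_
  rw [← h]
  push_cast
  rw [ZMod.pow_card_sub_one_eq_one hz, mul_one]

end

theorem twist_X1_18_congruence_general (d : ℤ) (hd : Squarefree d)
    (h : ∃ x y : ℚ, (d : ℚ) * y ^ 2 =
      x ^ 6 + 2 * x ^ 5 + 5 * x ^ 4 + 10 * x ^ 3 + 10 * x ^ 2 + 4 * x + 1) :
    0 < d ∧ (d ≡ 1 [ZMOD 24] ∨ d ≡ 9 [ZMOD 24]) := by
  obtain ⟨x, y, hxy⟩ := h
  have hd_pos : 0 < d := by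
    have : (0 : ℚ) < d * y ^ 2 := hxy ▸ f18_pos x
    exact_mod_cast pos_of_mul_pos_left this (sq_nonneg y)
  obtain ⟨z, hz⟩ := exists_int_mul_sq_eq_f18Form hd hxy
  have hcop := x.isCoprime_num_den
  have h8 : d ≡ 1 [ZMOD 8] := Int.modEq_one_eight_of_mul_sq_eq hz (f18Form_modEq_one_eight hcop)
  have h3 : ¬ d ≡ 2 [ZMOD 3] := fun h2 => f18Form_not_modEq_two_three hcop
    ((Int.modEq_three_of_mul_sq_eq hz (f18Form_not_dvd_nine hcop)).symm.trans h2)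
  refine ⟨hd_pos, ?_⟩
  simp only [Int.ModEq] at h8 h3 ⊢
  omega

/-- Congruence conditions for rational points on twists of `X₁(18)` (Krumm):
if `d` is squarefree, `d ∉ {0,1}`, and `d·y² = f₁₈(x)` has a rational solution,
then `d > 0` and `d ≡ 1` or `9 (mod 24)`. -/
theorem twist_X1_18_congruence (d : ℤ) (hd : Squarefree d) (hd0 : d ≠ 0) (hd1 : d ≠ 1)
    (h : ∃ x y : ℚ, (d : ℚ) * y ^ 2 =
      x ^ 6 + 2 * x ^ 5 + 5 * x ^ 4 + 10 * x ^ 3 + 10 * x ^ 2 + 4 * x + 1) :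
    0 < d ∧ (d ≡ 1 [ZMOD 24] ∨ d ≡ 9 [ZMOD 24]) :=
  twist_X1_18_congruence_general d hd h
end

section
/- For every d in the set {17, 113, 193, 313, 481, 1153, 1417, 2257, 3769, 3961, 5449, 6217, 6641, 9881}, there exist rational numbers x, y with d·y² = f₁₃(x). -/
/-- For every `d` in `S₁₃`, the twisted modular curve `d·y² = f₁₃(x)` has a
rational point. -/
theorem exists_rational_point_on_twist_X1_13 (d : ℤ)
    (hd : d ∈ ({17, 113, 193, 313, 481, 1153, 1417, 2257, 3769, 3961, 5449, 6217,
      6641, 9881} : Set ℤ)) :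
    ∃ x y : ℚ, (d : ℚ) * y ^ 2 =
      x ^ 6 - 2 * x ^ 5 + x ^ 4 - 2 * x ^ 3 + 6 * x ^ 2 - 4 * x + 1 := by
  simp only [Set.mem_insert_iff, Set.mem_singleton_iff] at hd
  rcases hd with rfl|rfl|rfl|rfl|rfl|rfl|rfl|rfl|rfl|rfl|rfl|rfl|rfl|rfl
  · exact ⟨-1/1, 1/1, by norm_num⟩
  · exact ⟨-11/2, 149/8, by norm_num⟩
  · exact ⟨-2/1, 1/1, by norm_num⟩
  · exact ⟨-1/2, 1/8, by norm_num⟩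
  · exact ⟨-1/9, 41/729, by norm_num⟩
  · exact ⟨-8/1, 17/1, by norm_num⟩
  · exact ⟨-3/1, 1/1, by norm_num⟩
  · exact ⟨-1/3, 1/27, by norm_num⟩
  · exact ⟨-3/2, 1/8, by norm_num⟩
  · exact ⟨-1/15, 61/3375, by norm_num⟩
  · exact ⟨-2/3, 1/27, by norm_num⟩
  · exact ⟨-7/9, 29/729, by norm_num⟩
  · exact ⟨-4/1, 1/1, by norm_num⟩
  · exact ⟨-1/4, 1/64, by norm_num⟩
end

section
/- For every d in the set {33, 337, 457, 1009, 1993, 2833, 7369, 8241, 9049}, there exist rational numbers x, y with d·y² = f₁₈(x). -/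
/-- For every `d` in `S₁₈`, the twisted modular curve `d·y² = f₁₈(x)` has a
rational point. -/
theorem exists_rational_point_on_twist_X1_18 (d : ℤ)
    (hd : d ∈ ({33, 337, 457, 1009, 1993, 2833, 7369, 8241, 9049} : Set ℤ)) :
    ∃ x y : ℚ, (d : ℚ) * y ^ 2 =
      x ^ 6 + 2 * x ^ 5 + 5 * x ^ 4 + 10 * x ^ 3 + 10 * x ^ 2 + 4 * x + 1 := by
  simp only [Set.mem_insert_iff, Set.mem_singleton_iff] at hd
  rcases hd with rfl | rfl | rfl | rfl | rfl | rfl | rfl | rfl | rfl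
  · exact ⟨-2, 1, by norm_num⟩
  · exact ⟨-3/2, 1/8, by norm_num⟩
  · exact ⟨-3, 1, by norm_num⟩
  · exact ⟨-8/5, 11/125, by norm_num⟩
  · exact ⟨-4/3, 1/27, by norm_num⟩
  · exact ⟨-4, 1, by norm_num⟩
  · exact ⟨-5/3, 1/27, by norm_num⟩
  · exact ⟨-5/4, 1/64, by norm_num⟩
  · exact ⟨-5/2, 1/8, by norm_num⟩
end
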